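/- Let p(t) = 8(1+t²b²)⁴ t³ a² A² + 8(1+t²a²)⁴ t³ b² B² + (1+t²a²)(1+t²b²) q(t), where a, b, A, B are real numbers with a·b ≠ 0, a² ≠ b², and q is a polynomial with real coefficients. If p(t) = 0 for all real t, then A = 0 and B = 0. -/

import Mathlib

/-!
Since p(t) = 0 for every real t, p is the zero polynomial, so it also vanishes at the complex
points t = i/a and t = i/b. At t = i/a the factor 1 + t²a² kills the second and third terms,
leaving 8(1 + t²b²)⁴t³a²A² = 0 where 1 + t²b² = (a² − b²)/a² ≠ 0; hence A = 0, and
symmetrically B = 0.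
-/

open Polynomial Complex

noncomputable def identityPoly {R : Type*} [CommRing R] (a b A B : R) (q : R[X]) : R[X] :=
  8 * (1 + X ^ 2 * C b ^ 2) ^ 4 * X ^ 3 * C a ^ 2 * C A ^ 2
    + 8 * (1 + X ^ 2 * C a ^ 2) ^ 4 * X ^ 3 * C b ^ 2 * C B ^ 2
    + (1 + X ^ 2 * C a ^ 2) * (1 + X ^ 2 * C b ^ 2) * q

section
variable {R : Type*} [CommRing R] (a b A B : R) (q : R[X])

theorem eval_identityPoly (t : R) :
    (identityPoly a b A B q).eval t =
      8 * (1 + t ^ 2 * b ^ 2) ^ 4 * t ^ 3 * a ^ 2 * A ^ 2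
        + 8 * (1 + t ^ 2 * a ^ 2) ^ 4 * t ^ 3 * b ^ 2 * B ^ 2
        + (1 + t ^ 2 * a ^ 2) * (1 + t ^ 2 * b ^ 2) * q.eval t := by
  simp [identityPoly]

theorem identityPoly_swap : identityPoly b a B A q = identityPoly a b A B q := by
  unfold identityPoly; ring

theorem map_identityPoly {S : Type*} [CommRing S] (f : R →+* S) :
    (identityPoly a b A B q).map f = identityPoly (f a) (f b) (f A) (f B) (q.map f) := by
  simp [identityPoly]

end

theorem eq_zero_of_eval_identityPoly_eq_zero {K : Type*} [Field K] [CharZero K]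
    {a b A B x : K} {q : K[X]} (hx : 1 + x ^ 2 * a ^ 2 = 0) (hab : a ^ 2 ≠ b ^ 2)
    (h : (identityPoly a b A B q).eval x = 0) : A = 0 := by
  have ha : a ≠ 0 := by rintro rfl; simp at hx
  have hx0 : x ≠ 0 := by rintro rfl; simp at hx
  have hxb : 1 + x ^ 2 * b ^ 2 ≠ 0 := by
    have : 1 + x ^ 2 * b ^ 2 = x ^ 2 * (b ^ 2 - a ^ 2) := by linear_combination hx
    rw [this]
    exact mul_ne_zero (pow_ne_zero _ hx0) (sub_ne_zero.mpr (Ne.symm hab))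
  rw [eval_identityPoly, hx] at h
  simpa [hxb, hx0, ha] using h

theorem one_add_sq_I_div_mul_sq {c : ℂ} (hc : c ≠ 0) : 1 + (I / c) ^ 2 * c ^ 2 = 0 := by
  field_simp; simp

theorem polynomial_identity_forces_vanishing (a b A B : ℝ) (q : Polynomial ℝ)
    (hab : a * b ≠ 0) (hsq : a^2 ≠ b^2)
    (hp : ∀ t : ℝ,
      8*(1 + t^2*b^2)^4 * t^3 * a^2 * A^2 + 8*(1 + t^2*a^2)^4 * t^3 * b^2 * B^2
        + (1 + t^2*a^2)*(1 + t^2*b^2) * q.eval t = 0) :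
    A = 0 ∧ B = 0 := by
  obtain ⟨ha, hb⟩ : (a : ℂ) ≠ 0 ∧ (b : ℂ) ≠ 0 := by exact_mod_cast mul_ne_zero_iff.mp hab
  have hsqC : (a : ℂ) ^ 2 ≠ (b : ℂ) ^ 2 := by exact_mod_cast hsq
  have hP : identityPoly a b A B q = 0 := Polynomial.funext fun t => by
    simpa [eval_identityPoly] using hp t
  have hPC : identityPoly (a : ℂ) b A B (q.map ofRealHom) = 0 := by
    simpa [hP] using (map_identityPoly a b A B q ofRealHom).symm
  constructor
  · exact ofReal_eq_zero.mp <| eq_zero_of_eval_identityPoly_eq_zero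
      (one_add_sq_I_div_mul_sq ha) hsqC (by rw [hPC, eval_zero])
  · rw [← identityPoly_swap] at hPC
    exact ofReal_eq_zero.mp <| eq_zero_of_eval_identityPoly_eq_zero
      (one_add_sq_I_div_mul_sq hb) hsqC.symm (by rw [hPC, eval_zero])
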